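/- For every natural number i > 0, f(1 / (3^i + 1)) = 2^i / (3^i + 2^i). -/

import Mathlib

/-! The points `a = 1 / (3 ^ i + 1)` and `1 - a = 3 ^ i * a` are exchanged by the contractions
`x ↦ x / 3 ^ i` and `x ↦ 1 - (1 - x) / 3 ^ i`, which scale `f` and `1 - f` by `r = (2/3) ^ i`.
Hence `f a = r * (1 - r * (1 - f a))`, and since `r ≠ 1` this forces `f a = r / (1 + r)`. -/

open intervalIntegral Set

section SelfSimilar

variable {f : ℝ → ℝ}

theorem map_div_three_pow (hw1 : ∀ x ∈ Icc (0:ℝ) 1, f (x / 3) = (2/3) * f x) :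
    ∀ (k : ℕ), ∀ x ∈ Icc (0:ℝ) 1, f (x / 3 ^ k) = (2/3) ^ k * f x := by
  intro k
  induction k with
  | zero => simp
  | succ k ih =>
    intro x hx
    have hx3 : x / 3 ∈ Icc (0:ℝ) 1 := ⟨by linarith [hx.1], by linarith [hx.2]⟩
    calc f (x / 3 ^ (k + 1)) = f (x / 3 / 3 ^ k) := by ring_nf
      _ = (2/3) ^ k * f (x / 3) := ih _ hx3
      _ = (2/3) ^ (k + 1) * f x := by rw [hw1 x hx]; ring

theorem map_one_sub_div_three_pow
    (hw3 : ∀ x ∈ Icc (0:ℝ) 1, f ((2 + x) / 3) = 1/3 + (2/3) * f x) :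
    ∀ (k : ℕ), ∀ x ∈ Icc (0:ℝ) 1, f (1 - (1 - x) / 3 ^ k) = 1 - (2/3) ^ k * (1 - f x) := by
  intro k
  induction k with
  | zero => simp
  | succ k ih =>
    intro x hx
    have hy : (2 + x) / 3 ∈ Icc (0:ℝ) 1 := ⟨by linarith [hx.1], by linarith [hx.2]⟩
    calc f (1 - (1 - x) / 3 ^ (k + 1)) = f (1 - (1 - (2 + x) / 3) / 3 ^ k) := by ring_nf
      _ = 1 - (2/3) ^ k * (1 - f ((2 + x) / 3)) := ih _ hy
      _ = 1 - (2/3) ^ (k + 1) * (1 - f x) := by rw [hw3 x hx]; ring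

end SelfSimilar

theorem bourbaki_stmt_general (f : ℝ → ℝ)
    (hw1 : ∀ x ∈ Set.Icc (0:ℝ) 1, f (x / 3) = (2/3) * f x)
    (hw3 : ∀ x ∈ Set.Icc (0:ℝ) 1, f ((2 + x) / 3) = 1/3 + (2/3) * f x) :
    ∀ i : ℕ, 0 < i → f (1 / (3 ^ i + 1)) = 2 ^ i / (3 ^ i + 2 ^ i) := by
  intro i hi
  set a : ℝ := 1 / (3 ^ i + 1) with ha
  have h3 : (0:ℝ) < 3 ^ i := by positivity
  have hcompl : 1 - a = 3 ^ i * a := by rw [ha]; field_simp; ring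
  have ha_mem : a ∈ Icc (0:ℝ) 1 := ⟨by positivity, by nlinarith⟩
  have hcompl_mem : 1 - a ∈ Icc (0:ℝ) 1 := ⟨by linarith [ha_mem.2], by linarith [ha_mem.1]⟩
  have hf_small := map_div_three_pow hw1 i (1 - a) hcompl_mem
  have hf_large := map_one_sub_div_three_pow hw3 i a ha_mem
  have hdiv : (1 - a) / 3 ^ i = a := by rw [hcompl, mul_div_cancel_left₀ _ h3.ne']
  rw [hdiv] at hf_small hf_large
  set r : ℝ := (2/3) ^ i with hr
  have hr1 : r < 1 := pow_lt_one₀ (by norm_num) (by norm_num) hi.ne'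
  have hfa : f a * (1 + r) = r := by
    have : (1 - r) * (f a * (1 + r) - r) = 0 := by rw [hf_large] at hf_small; linear_combination hf_small
    rcases mul_eq_zero.mp this with h | h <;> linarith
  rw [hr, div_pow] at hfa
  rw [eq_div_iff (by positivity)]
  field_simp at hfa
  linarith

theorem bourbaki_stmt (f : ℝ → ℝ)
    (hcont : ContinuousOn f (Set.Icc 0 1))
    (h0 : f 0 = 0) (h1 : f 1 = 1)
    (hw1 : ∀ x ∈ Set.Icc (0:ℝ) 1, f (x / 3) = (2/3) * f x)
    (hw2 : ∀ x ∈ Set.Icc (0:ℝ) 1, f ((2 - x) / 3) = (1/3) * (1 + f x))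
    (hw3 : ∀ x ∈ Set.Icc (0:ℝ) 1, f ((2 + x) / 3) = 1/3 + (2/3) * f x) :
    ∀ i : ℕ, 0 < i → f (1 / (3 ^ i + 1)) = 2 ^ i / (3 ^ i + 2 ^ i) :=
  bourbaki_stmt_general f hw1 hw3
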